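/- Let μ and ν be probability measures on a measurable space α and let κ and η be Markov kernels from α to a measurable space β such that the map x ↦ TV(κ(x), η(x)) is measurable. Then TV(μ ⊗ κ, ν ⊗ η) ≤ TV(μ, ν) + ∫ TV(κ(x), η(x)) dμ(x). -/

import Mathlib

/-!
Fix a measurable set `A ⊆ α × β` and write `f x = κ x (A_x)`, `g x = η x (A_x)` for the
measures of its sections. Then `(μ ⊗ κ)(A) - (ν ⊗ η)(A) = ∫ (f - g) dμ + (∫ g dμ - ∫ g dν)`.
The first term is at most `∫ TV(κ x, η x) dμ` pointwise, and the second at most `TV(μ, ν)`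
because `g` takes values in `[0, 1]`: on the positive part `s` of a Hahn decomposition of
`μ - ν`, the bound `g ≤ 1` gives `∫_s g d(μ - ν) ≤ (μ - ν)(s)`, while on `sᶜ` the
contribution of `g ≥ 0` is nonpositive.
-/

open MeasureTheory ProbabilityTheory

/-- Total variation distance between two measures:
`TV(P,Q) = sup { |P(A) - Q(A)| : A measurable }`. -/
noncomputable def tvDist {α : Type*} [MeasurableSpace α] (P Q : Measure α) : ℝ :=
  ⨆ A : {s : Set α // MeasurableSet s}, |(P A.1).toReal - (Q A.1).toReal|

open Set

section TotalVariation

variable {α : Type*} [MeasurableSpace α] {P Q : Measure α}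

lemma tvDist_comm (P Q : Measure α) : tvDist P Q = tvDist Q P := by
  simp only [tvDist, abs_sub_comm]

lemma tvDist_nonneg (P Q : Measure α) : 0 ≤ tvDist P Q :=
  Real.iSup_nonneg fun _ ↦ abs_nonneg _

lemma tvDist_le_one (P Q : Measure α) [IsProbabilityMeasure P] [IsProbabilityMeasure Q] :
    tvDist P Q ≤ 1 :=
  Real.iSup_le (fun _ ↦ abs_sub_le_of_nonneg_of_le measureReal_nonneg measureReal_le_one
    measureReal_nonneg measureReal_le_one) zero_le_one

lemma tvDist_le_of_forall {c : ℝ}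
    (h : ∀ s, MeasurableSet s → |P.real s - Q.real s| ≤ c) : tvDist P Q ≤ c :=
  haveI : Nonempty {s : Set α // MeasurableSet s} := ⟨⟨∅, .empty⟩⟩
  ciSup_le fun A ↦ h A.1 A.2

lemma abs_measureReal_sub_le_tvDist [IsFiniteMeasure P] [IsFiniteMeasure Q] {s : Set α}
    (hs : MeasurableSet s) : |P.real s - Q.real s| ≤ tvDist P Q := by
  refine le_ciSup (f := fun A : {s : Set α // MeasurableSet s} ↦ |P.real A.1 - Q.real A.1|)
    ⟨P.real univ + Q.real univ, ?_⟩ ⟨s, hs⟩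
  rintro _ ⟨A, rfl⟩
  exact abs_sub_le_of_nonneg_of_le measureReal_nonneg
    ((measureReal_mono (subset_univ _)).trans (le_add_of_nonneg_right measureReal_nonneg))
    measureReal_nonneg
    ((measureReal_mono (subset_univ _)).trans (le_add_of_nonneg_left measureReal_nonneg))

lemma integrable_of_nonneg_of_le_one {μ : Measure α} [IsFiniteMeasure μ] {f : α → ℝ}
    (hf : Measurable f) (hf0 : ∀ x, 0 ≤ f x) (hf1 : ∀ x, f x ≤ 1) : Integrable f μ :=
  .of_bound hf.aestronglyMeasurable 1 (ae_of_all _ fun x ↦ by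
    simpa [abs_of_nonneg (hf0 x)] using hf1 x)

lemma integral_sub_integral_le_tvDist [IsFiniteMeasure P] [IsFiniteMeasure Q] {f : α → ℝ}
    (hf : Measurable f) (hf0 : ∀ x, 0 ≤ f x) (hf1 : ∀ x, f x ≤ 1) :
    ∫ x, f x ∂P - ∫ x, f x ∂Q ≤ tvDist P Q := by
  obtain ⟨s, hs, hQP, hPQ⟩ := exists_isHahnDecomposition Q P
  have hfP : Integrable f P := integrable_of_nonneg_of_le_one hf hf0 hf1
  have hfQ : Integrable f Q := integrable_of_nonneg_of_le_one hf hf0 hf1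
  have h_on : ∫ x in s, (1 - f x) ∂Q ≤ ∫ x in s, (1 - f x) ∂P :=
    integral_mono_measure hQP (ae_of_all _ fun x ↦ sub_nonneg.2 (hf1 x))
      ((integrable_const 1).sub hfP).restrict
  have h_off : ∫ x in sᶜ, f x ∂P ≤ ∫ x in sᶜ, f x ∂Q :=
    integral_mono_measure hPQ (ae_of_all _ hf0) hfQ.restrict
  rw [integral_sub (integrable_const 1) hfQ.restrict, integral_sub (integrable_const 1)
    hfP.restrict, setIntegral_const, setIntegral_const, smul_eq_mul, smul_eq_mul, mul_one,
    mul_one] at h_on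
  calc ∫ x, f x ∂P - ∫ x, f x ∂Q
      = (∫ x in s, f x ∂P - ∫ x in s, f x ∂Q) + (∫ x in sᶜ, f x ∂P - ∫ x in sᶜ, f x ∂Q) := by
        rw [← integral_add_compl hs hfP, ← integral_add_compl hs hfQ]; ring
    _ ≤ P.real s - Q.real s := by linarith
    _ ≤ tvDist P Q := (le_abs_self _).trans (abs_measureReal_sub_le_tvDist hs)

lemma abs_integral_sub_integral_le_tvDist [IsFiniteMeasure P] [IsFiniteMeasure Q] {f : α → ℝ}
    (hf : Measurable f) (hf0 : ∀ x, 0 ≤ f x) (hf1 : ∀ x, f x ≤ 1) :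
    |∫ x, f x ∂P - ∫ x, f x ∂Q| ≤ tvDist P Q :=
  abs_sub_le_iff.2 ⟨integral_sub_integral_le_tvDist hf hf0 hf1,
    tvDist_comm Q P ▸ integral_sub_integral_le_tvDist hf hf0 hf1⟩

end TotalVariation

section Kernel

variable {α β : Type*} [MeasurableSpace α] [MeasurableSpace β]

namespace MeasureTheory.Measure

lemma compProd_real_apply (μ : Measure α) [SFinite μ] (κ : Kernel α β)
    [IsFiniteKernel κ] {s : Set (α × β)} (hs : MeasurableSet s) :
    (μ ⊗ₘ κ).real s = ∫ x, (κ x).real (Prod.mk x ⁻¹' s) ∂μ := by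
  rw [measureReal_def, Measure.compProd_apply hs, ← integral_toReal
    (Kernel.measurable_kernel_prodMk_left hs).aemeasurable (ae_of_all _ fun _ ↦ measure_lt_top _ _)]
  rfl

end MeasureTheory.Measure

lemma abs_integral_sub_integral_le_integral_tvDist (μ : Measure α) [IsFiniteMeasure μ]
    (κ η : Kernel α β) [IsMarkovKernel κ] [IsMarkovKernel η]
    (hmeas : Measurable fun x ↦ tvDist (κ x) (η x)) {s : Set (α × β)} (hs : MeasurableSet s) :
    |∫ x, (κ x).real (Prod.mk x ⁻¹' s) ∂μ - ∫ x, (η x).real (Prod.mk x ⁻¹' s) ∂μ|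
      ≤ ∫ x, tvDist (κ x) (η x) ∂μ := by
  have hκ : Integrable (fun x ↦ (κ x).real (Prod.mk x ⁻¹' s)) μ :=
    integrable_of_nonneg_of_le_one (Kernel.measurable_kernel_prodMk_left hs).ennreal_toReal
      (fun _ ↦ measureReal_nonneg) (fun _ ↦ measureReal_le_one)
  have hη : Integrable (fun x ↦ (η x).real (Prod.mk x ⁻¹' s)) μ :=
    integrable_of_nonneg_of_le_one (Kernel.measurable_kernel_prodMk_left hs).ennreal_toReal
      (fun _ ↦ measureReal_nonneg) (fun _ ↦ measureReal_le_one)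
  have hTV : Integrable (fun x ↦ tvDist (κ x) (η x)) μ :=
    integrable_of_nonneg_of_le_one hmeas (fun _ ↦ tvDist_nonneg _ _) (fun _ ↦ tvDist_le_one _ _)
  rw [← integral_sub hκ hη]
  exact abs_integral_le_integral_abs.trans <| integral_mono (hκ.sub hη).abs hTV fun x ↦
    abs_measureReal_sub_le_tvDist (measurable_prodMk_left hs)

end Kernel

/-- For probability measures `μ, ν` on `α` and Markov kernels `κ, η` from
`α` to `β` (with `x ↦ TV(κ x, η x)` measurable),
`TV(μ ⊗ κ, ν ⊗ η) ≤ TV(μ, ν) + ∫ TV(κ x, η x) dμ(x)`. -/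
theorem tvDist_compProd_le_add {α β : Type*} [MeasurableSpace α] [MeasurableSpace β]
    (μ ν : Measure α) [IsProbabilityMeasure μ] [IsProbabilityMeasure ν]
    (κ η : Kernel α β) [IsMarkovKernel κ] [IsMarkovKernel η]
    (hmeas : Measurable fun x => tvDist (κ x) (η x)) :
    tvDist (μ ⊗ₘ κ) (ν ⊗ₘ η) ≤ tvDist μ ν + ∫ x, tvDist (κ x) (η x) ∂μ := by
  refine tvDist_le_of_forall fun s hs ↦ ?_
  set g : α → ℝ := fun x ↦ (η x).real (Prod.mk x ⁻¹' s)
  have hg : |∫ x, g x ∂μ - ∫ x, g x ∂ν| ≤ tvDist μ ν :=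
    abs_integral_sub_integral_le_tvDist (Kernel.measurable_kernel_prodMk_left hs).ennreal_toReal
      (fun _ ↦ measureReal_nonneg) (fun _ ↦ measureReal_le_one)
  rw [Measure.compProd_real_apply μ κ hs, Measure.compProd_real_apply ν η hs]
  calc _ ≤ |∫ x, (κ x).real (Prod.mk x ⁻¹' s) ∂μ - ∫ x, g x ∂μ|
        + |∫ x, g x ∂μ - ∫ x, g x ∂ν| := abs_sub_le _ _ _
    _ ≤ ∫ x, tvDist (κ x) (η x) ∂μ + tvDist μ ν :=
        add_le_add (abs_integral_sub_integral_le_integral_tvDist μ κ η hmeas hs) hg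
    _ = _ := add_comm _ _
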